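/- Define $\theta:\mathbb{R}\to\mathbb{R}$ by $\theta(x) = \arctan x$ for $x < 0$ and $\theta(x) = x$ for $x \ge 0$, and let $V(x) = (\cos\theta(x), -\sin\theta(x))$. Then $V$ is twice continuously differentiable on $\mathbb{R}$, its third derivative exists and is bounded on $\mathbb{R}\setminus\{0\}$, but $V'''$ does not extend continuously to $x = 0$: the one-sided limits of $\theta'''$ at $0$ are $-2$ (from the left) and $0$ (from the right). -/

import Mathlib

/-!
`θ` glues `arctan` to the identity at `0`; since `arctan x = x - x ^ 3 / 3 + O(x ^ 5)`, the two
pieces agree to second order, so `θ` is `C²`, while `θ'''` jumps from `arctan''' 0 = -2` to `0`.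
Writing `V = c ∘ θ` with `c t = (cos t, -sin t)`, the chain rule gives
`V''' = θ''' • c' ∘ θ + 3 θ' θ'' • c'' ∘ θ + θ' ^ 3 • c''' ∘ θ` away from `0`. This is bounded,
because the derivatives of `c` are again values of `c` and `θ'`, `θ''`, `θ'''` are bounded
rational functions on each side.
-/

open Real Filter Set Topology

theorem continuous_ite_lt {X : Type*} [TopologicalSpace X] {g h : ℝ → X} {a : ℝ}
    (hg : Continuous g) (hh : Continuous h) (hgh : g a = h a) :
    Continuous fun y => if y < a then g y else h y := by
  refine continuous_if (fun y hy => ?_) hg.continuousOn hh.continuousOn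
  obtain rfl : y = a := by simpa using frontier_lt_subset_eq continuous_id continuous_const hy
  exact hgh

section Piecewise

variable {F : Type*} [NormedAddCommGroup F] [NormedSpace ℝ F] {g h : ℝ → F} {a x : ℝ}

theorem hasDerivAt_ite_lt_of_lt {g' : F} (hx : x < a) (hg : HasDerivAt g g' x) :
    HasDerivAt (fun y => if y < a then g y else h y) g' x :=
  hg.congr_of_eventuallyEq <| (eventually_lt_nhds hx).mono fun _ hy => if_pos hy

theorem hasDerivAt_ite_lt_of_gt {h' : F} (hx : a < x) (hh : HasDerivAt h h' x) :
    HasDerivAt (fun y => if y < a then g y else h y) h' x :=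
  hh.congr_of_eventuallyEq <| (eventually_gt_nhds hx).mono fun _ hy => if_neg hy.not_gt

theorem hasDerivAt_ite_lt_self {f' : F} (hg : HasDerivAt g f' a) (hh : HasDerivAt h f' a)
    (hgh : g a = h a) : HasDerivAt (fun y => if y < a then g y else h y) f' a := by
  have hIic : HasDerivWithinAt (fun y => if y < a then g y else h y) f' (Iic a) a :=
    hg.hasDerivWithinAt.congr (fun y hy => by
      rcases (mem_Iic.1 hy).lt_or_eq with hy | rfl
      · exact if_pos hy
      · simp [hgh]) (by simp [hgh])
  have hIci : HasDerivWithinAt (fun y => if y < a then g y else h y) f' (Ici a) a :=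
    hh.hasDerivWithinAt.congr (fun y hy => if_neg (mem_Ici.1 hy).not_gt) (by simp)
  simpa [Iic_union_Ici] using (hIic.union hIci).hasDerivAt (by simp [Iic_union_Ici])

theorem hasDerivAt_ite_lt_of_ne {g' h' : ℝ → F} (hg : ∀ y, HasDerivAt g (g' y) y)
    (hh : ∀ y, HasDerivAt h (h' y) y) (hx : x ≠ a) :
    HasDerivAt (fun y => if y < a then g y else h y) (if x < a then g' x else h' x) x := by
  rcases hx.lt_or_gt with hx | hx
  · simpa [hx] using hasDerivAt_ite_lt_of_lt hx (hg x)
  · simpa [hx.not_gt] using hasDerivAt_ite_lt_of_gt hx (hh x)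

theorem hasDerivAt_ite_lt {g' h' : ℝ → F} (hg : ∀ y, HasDerivAt g (g' y) y)
    (hh : ∀ y, HasDerivAt h (h' y) y) (hgh : g a = h a) (hgh' : g' a = h' a) (x : ℝ) :
    HasDerivAt (fun y => if y < a then g y else h y) (if x < a then g' x else h' x) x := by
  rcases eq_or_ne x a with rfl | hx
  · simpa [hgh'] using hasDerivAt_ite_lt_self (hgh' ▸ hg x) (hh x) hgh
  · exact hasDerivAt_ite_lt_of_ne hg hh hx

end Piecewise

section ChainRule

variable {F : Type*} [NormedAddCommGroup F] [NormedSpace ℝ F] {c c₁ c₂ c₃ : ℝ → F}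
  {φ φ₁ φ₂ φ₃ : ℝ → ℝ}

theorem deriv_deriv_comp_eq (hc₁ : ∀ t, HasDerivAt c (c₁ t) t) (hc₂ : ∀ t, HasDerivAt c₁ (c₂ t) t)
    (hφ₁ : ∀ x, HasDerivAt φ (φ₁ x) x) (hφ₂ : ∀ x, HasDerivAt φ₁ (φ₂ x) x) :
    deriv (deriv (c ∘ φ)) = fun x => φ₂ x • c₁ (φ x) + φ₁ x ^ 2 • c₂ (φ x) := by
  have hc₁φ (x : ℝ) : HasDerivAt (fun y => c₁ (φ y)) (φ₁ x • c₂ (φ x)) x :=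
    (hc₂ (φ x)).scomp x (hφ₁ x)
  have hderiv : deriv (c ∘ φ) = fun x => φ₁ x • c₁ (φ x) :=
    funext fun x => ((hc₁ (φ x)).scomp x (hφ₁ x)).deriv
  funext x
  rw [hderiv, ((hφ₂ x).fun_smul (hc₁φ x)).deriv]
  module

theorem hasDerivAt_deriv_deriv_comp (hc₁ : ∀ t, HasDerivAt c (c₁ t) t)
    (hc₂ : ∀ t, HasDerivAt c₁ (c₂ t) t) (hc₃ : ∀ t, HasDerivAt c₂ (c₃ t) t)
    (hφ₁ : ∀ x, HasDerivAt φ (φ₁ x) x) (hφ₂ : ∀ x, HasDerivAt φ₁ (φ₂ x) x) {x : ℝ}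
    (hφ₃ : HasDerivAt φ₂ (φ₃ x) x) :
    HasDerivAt (deriv (deriv (c ∘ φ)))
      (φ₃ x • c₁ (φ x) + (3 * φ₁ x * φ₂ x) • c₂ (φ x) + φ₁ x ^ 3 • c₃ (φ x)) x := by
  rw [deriv_deriv_comp_eq hc₁ hc₂ hφ₁ hφ₂]
  have hc₁φ : HasDerivAt (fun y => c₁ (φ y)) (φ₁ x • c₂ (φ x)) x := (hc₂ (φ x)).scomp x (hφ₁ x)
  have hc₂φ : HasDerivAt (fun y => c₂ (φ y)) (φ₁ x • c₃ (φ x)) x := (hc₃ (φ x)).scomp x (hφ₁ x)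
  convert (hφ₃.fun_smul hc₁φ).fun_add (((hφ₂ x).fun_pow 2).fun_smul hc₂φ) using 1
  simp only [Nat.cast_ofNat, Nat.add_one_sub_one, pow_one]
  module

end ChainRule

noncomputable def clockwiseCircle (t : ℝ) : ℝ × ℝ := (cos t, -sin t)

theorem contDiff_clockwiseCircle {n : WithTop ℕ∞} : ContDiff ℝ n clockwiseCircle :=
  contDiff_cos.prodMk contDiff_sin.neg

theorem norm_clockwiseCircle_le (t : ℝ) : ‖clockwiseCircle t‖ ≤ 1 :=
  norm_prod_le_iff.2 ⟨(norm_eq_abs _).trans_le (abs_cos_le_one t),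
    (norm_neg _).trans_le ((norm_eq_abs _).trans_le (abs_sin_le_one t))⟩

theorem hasDerivAt_clockwiseCircle (t : ℝ) :
    HasDerivAt clockwiseCircle (clockwiseCircle (t + π / 2)) t := by
  have h : clockwiseCircle (t + π / 2) = (-sin t, -cos t) := by
    simp [clockwiseCircle, cos_add_pi_div_two, sin_add_pi_div_two]
  rw [h]
  exact (hasDerivAt_cos t).prodMk (hasDerivAt_sin t).neg

theorem hasDerivAt_clockwiseCircle_comp_add (s t : ℝ) :
    HasDerivAt (fun τ => clockwiseCircle (τ + s)) (clockwiseCircle (t + (s + π / 2))) t := by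
  simpa [add_assoc] using (hasDerivAt_clockwiseCircle (t + s)).comp_add_const t s

theorem norm_smul_clockwiseCircle_add_le (a b c s t u : ℝ) :
    ‖a • clockwiseCircle s + b • clockwiseCircle t + c • clockwiseCircle u‖ ≤ |a| + |b| + |c| := by
  have h (r t : ℝ) : ‖r • clockwiseCircle t‖ ≤ |r| := by
    simpa [norm_smul] using
      mul_le_mul_of_nonneg_left (norm_clockwiseCircle_le t) (abs_nonneg r)
  exact (norm_add₃_le ..).trans (add_le_add_three (h a s) (h b t) (h c u))

theorem hasDerivAt_inv_one_add_sq (x : ℝ) :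
    HasDerivAt (fun x => (1 + x ^ 2)⁻¹) (-2 * x / (1 + x ^ 2) ^ 2) x := by
  refine (((hasDerivAt_pow 2 x).const_add 1).fun_inv (by positivity)).congr_deriv ?_
  norm_num

theorem hasDerivAt_neg_two_mul_div_one_add_sq_sq (x : ℝ) :
    HasDerivAt (fun x => -2 * x / (1 + x ^ 2) ^ 2) ((6 * x ^ 2 - 2) / (1 + x ^ 2) ^ 3) x := by
  refine (((hasDerivAt_id' x).const_mul (-2)).fun_div
    (((hasDerivAt_pow 2 x).const_add 1).fun_pow 2) (by positivity)).congr_deriv ?_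
  field_simp
  ring

noncomputable def kinkedArctan (x : ℝ) : ℝ := if x < 0 then arctan x else x

noncomputable def kinkedArctan' (x : ℝ) : ℝ := if x < 0 then (1 + x ^ 2)⁻¹ else 1

noncomputable def kinkedArctan'' (x : ℝ) : ℝ := if x < 0 then -2 * x / (1 + x ^ 2) ^ 2 else 0

noncomputable def kinkedArctan''' (x : ℝ) : ℝ :=
  if x < 0 then (6 * x ^ 2 - 2) / (1 + x ^ 2) ^ 3 else 0

theorem hasDerivAt_kinkedArctan (x : ℝ) : HasDerivAt kinkedArctan (kinkedArctan' x) x :=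
  hasDerivAt_ite_lt hasDerivAt_arctan' (fun _ => hasDerivAt_id' _) (by simp) (by simp) x

theorem hasDerivAt_kinkedArctan' (x : ℝ) : HasDerivAt kinkedArctan' (kinkedArctan'' x) x :=
  hasDerivAt_ite_lt hasDerivAt_inv_one_add_sq (fun _ => hasDerivAt_const _ 1) (by simp) (by simp) x

theorem hasDerivAt_kinkedArctan'' {x : ℝ} (hx : x ≠ 0) :
    HasDerivAt kinkedArctan'' (kinkedArctan''' x) x :=
  hasDerivAt_ite_lt_of_ne hasDerivAt_neg_two_mul_div_one_add_sq_sq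
    (fun _ => hasDerivAt_const _ 0) hx

theorem deriv_kinkedArctan : deriv kinkedArctan = kinkedArctan' :=
  funext fun x => (hasDerivAt_kinkedArctan x).deriv

theorem deriv_kinkedArctan' : deriv kinkedArctan' = kinkedArctan'' :=
  funext fun x => (hasDerivAt_kinkedArctan' x).deriv

theorem continuous_kinkedArctan'' : Continuous kinkedArctan'' :=
  continuous_ite_lt (by fun_prop (disch := intros; positivity)) continuous_const (by simp)

theorem contDiff_kinkedArctan : ContDiff ℝ 2 kinkedArctan := by
  rw [show (2 : WithTop ℕ∞) = 1 + 1 from rfl, contDiff_succ_iff_deriv, deriv_kinkedArctan,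
    contDiff_one_iff_deriv, deriv_kinkedArctan']
  exact ⟨fun x => (hasDerivAt_kinkedArctan x).differentiableAt, by simp,
    fun x => (hasDerivAt_kinkedArctan' x).differentiableAt, continuous_kinkedArctan''⟩

theorem abs_kinkedArctan'_le (x : ℝ) : |kinkedArctan' x| ≤ 1 := by
  unfold kinkedArctan'
  split_ifs
  · rw [abs_inv, abs_of_pos (by positivity)]
    exact inv_le_one_of_one_le₀ (by nlinarith)
  · simp

theorem abs_kinkedArctan''_le (x : ℝ) : |kinkedArctan'' x| ≤ 2 := by
  unfold kinkedArctan''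
  split_ifs
  · rw [abs_div, abs_of_pos (by positivity : (0 : ℝ) < (1 + x ^ 2) ^ 2),
      div_le_iff₀ (by positivity)]
    exact abs_le.2 ⟨by nlinarith [sq_nonneg (x + 1), sq_nonneg (x ^ 2)],
      by nlinarith [sq_nonneg (x - 1), sq_nonneg (x ^ 2)]⟩
  · simp

theorem abs_kinkedArctan'''_le (x : ℝ) : |kinkedArctan''' x| ≤ 6 := by
  unfold kinkedArctan'''
  split_ifs
  · rw [abs_div, abs_of_pos (by positivity : (0 : ℝ) < (1 + x ^ 2) ^ 3),
      div_le_iff₀ (by positivity)]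
    exact abs_le.2 ⟨by nlinarith [pow_nonneg (sq_nonneg x) 2, pow_nonneg (sq_nonneg x) 3],
      by nlinarith [pow_nonneg (sq_nonneg x) 2, pow_nonneg (sq_nonneg x) 3]⟩
  · simp

theorem tendsto_kinkedArctan'''_nhdsLT : Tendsto kinkedArctan''' (𝓝[<] 0) (𝓝 (-2)) := by
  have h : ContinuousAt (fun x : ℝ => (6 * x ^ 2 - 2) / (1 + x ^ 2) ^ 3) 0 := by
    fun_prop (disch := positivity)
  have h' := h.continuousWithinAt (s := Iio 0) |>.tendsto
  norm_num at h'
  exact h'.congr' (eventually_nhdsWithin_of_forall fun x hx => (if_pos hx).symm)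

theorem tendsto_kinkedArctan'''_nhdsGT : Tendsto kinkedArctan''' (𝓝[>] 0) (𝓝 0) :=
  tendsto_const_nhds.congr'
    (eventually_nhdsWithin_of_forall fun _ hx => (if_neg (not_lt.2 (le_of_lt hx))).symm)

theorem stmt2 (θ : ℝ → ℝ) (V : ℝ → ℝ × ℝ)
    (hθ : ∀ x : ℝ, θ x = if x < 0 then Real.arctan x else x)
    (hV : ∀ x : ℝ, V x = (Real.cos (θ x), -Real.sin (θ x))) :
    ContDiff ℝ 2 V ∧
    (∃ C : ℝ, ∀ x : ℝ, x ≠ 0 → DifferentiableAt ℝ (deriv (deriv V)) x ∧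
        ‖deriv (deriv (deriv V)) x‖ ≤ C) ∧
    Filter.Tendsto (fun x => deriv (deriv (deriv θ)) x)
      (nhdsWithin 0 (Set.Iio 0)) (nhds (-2)) ∧
    Filter.Tendsto (fun x => deriv (deriv (deriv θ)) x)
      (nhdsWithin 0 (Set.Ioi 0)) (nhds 0) := by
  obtain rfl : θ = kinkedArctan := funext hθ
  obtain rfl : V = clockwiseCircle ∘ kinkedArctan := funext hV
  have hV₃ {x : ℝ} (hx : x ≠ 0) := hasDerivAt_deriv_deriv_comp hasDerivAt_clockwiseCircle
    (hasDerivAt_clockwiseCircle_comp_add _) (hasDerivAt_clockwiseCircle_comp_add _)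
    hasDerivAt_kinkedArctan hasDerivAt_kinkedArctan' (hasDerivAt_kinkedArctan'' hx)
  have hθ₃ : ∀ x ≠ 0, kinkedArctan''' x = deriv (deriv (deriv kinkedArctan)) x := fun x hx => by
    rw [deriv_kinkedArctan, deriv_kinkedArctan', (hasDerivAt_kinkedArctan'' hx).deriv]
  refine ⟨contDiff_clockwiseCircle.comp contDiff_kinkedArctan,
    ⟨6 + 3 * 1 * 2 + 1 ^ 3, fun x hx => ⟨(hV₃ hx).differentiableAt, ?_⟩⟩,
    tendsto_kinkedArctan'''_nhdsLT.congr' ?_, tendsto_kinkedArctan'''_nhdsGT.congr' ?_⟩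
  · rw [(hV₃ hx).deriv]
    refine (norm_smul_clockwiseCircle_add_le ..).trans ?_
    rw [abs_mul, abs_mul, abs_pow, abs_of_pos (by norm_num : (0 : ℝ) < 3)]
    gcongr
    exacts [abs_kinkedArctan'''_le x, abs_kinkedArctan'_le x, abs_kinkedArctan''_le x,
      abs_kinkedArctan'_le x]
  · exact eventually_nhdsWithin_of_forall fun x hx => hθ₃ x (ne_of_lt hx)
  · exact eventually_nhdsWithin_of_forall fun x hx => hθ₃ x (ne_of_gt hx)
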